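/- With σ as above and τ of order q, conjugation by σ_s satisfies c_{σ_s}(ω^{sd}(τ²)) = ω^{(s-1)d}(τ²) for s = 1,...,n-1, and the restriction of c_{σ_s} to the abelian subgroup A_n(σ) = B_n(σ) ∩ ⟨τ⟩^{(n)} is an involution (i.e., c_{σ_s}² = id on A_n(σ)). -/

import Mathlib

/-!
Write `ω = shift` and `σ = θ·ς₁·ω^d(ς₂)`. Since `ς₂` commutes with `τ = ς₁ς₂`, conjugation by
`ω^d(ς₂)` fixes `ω^d(τ²)`; so does conjugation by `ς₁`, whose support is disjoint from it; and `θ`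
moves `ω^d(τ²)` down to `τ²`. Shifting by `ω^{(s-1)d}` gives the first claim. For the second,
`θ ς₁ θ = ω^d(ς₁)` and `ω^d(ς₂) θ = θ ς₂` give `σ² = τ·ω^d(τ)`, hence
`σ_s² = ω^{(s-1)d}(τ)·ω^{sd}(τ) ∈ ⟨τ⟩^{(n)}`. The blocks `ω^{kd}(τ)` have disjoint supports, so
`⟨τ⟩^{(n)}` is abelian and `c_{σ_s}² = c_{σ_s²}` is trivial on it, in particular on `Aₙ(σ)`.
-/

/-- The shift of a permutation of `ℕ` up by `d`: fixes `{0,…,d-1}` and acts as `σ`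
conjugated by `k ↦ k + d` above. -/
def shift (d : ℕ) (σ : Equiv.Perm ℕ) : Equiv.Perm ℕ where
  toFun k := if k < d then k else σ (k - d) + d
  invFun k := if k < d then k else σ⁻¹ (k - d) + d
  left_inv k := by
    by_cases h : k < d
    · simp [h]
    · dsimp only
      rw [if_neg h, if_neg (by omega), Nat.add_sub_cancel, Equiv.Perm.inv_eq_iff_eq.mpr rfl]
      omega
  right_inv k := by
    by_cases h : k < d
    · simp [h]
    · dsimp only
      rw [if_neg h, if_neg (by omega), Nat.add_sub_cancel, show σ (σ⁻¹ (k - d)) = k - d from (Equiv.eq_symm_apply _).mp rfl]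
      omega

/-- The involution of `ℕ` swapping the blocks `{0,…,d-1}` and `{d,…,2d-1}`. -/
def theta (d : ℕ) : Equiv.Perm ℕ :=
  Function.Involutive.toPerm
    (fun k => if k < d then k + d else if k < 2 * d then k - d else k)
    (by intro k; dsimp only; split_ifs <;> omega)

open Equiv

section Shift

lemma shift_apply_of_lt {d k : ℕ} (π : Perm ℕ) (h : k < d) : shift d π k = k := by
  simp [shift, h]

lemma shift_apply_of_le {d k : ℕ} (π : Perm ℕ) (h : d ≤ k) : shift d π k = π (k - d) + d := by
  simp [shift, Nat.not_lt.2 h]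

lemma shift_mul (d : ℕ) (π ρ : Perm ℕ) : shift d (π * ρ) = shift d π * shift d ρ := by
  ext k
  rcases lt_or_ge k d with h | h
  · simp only [Perm.mul_apply, shift_apply_of_lt _ h]
  · rw [Perm.mul_apply, shift_apply_of_le _ h, shift_apply_of_le _ h,
      shift_apply_of_le _ (Nat.le_add_left d _),
      Nat.add_sub_cancel, Perm.mul_apply]

def shiftHom (d : ℕ) : Perm ℕ →* Perm ℕ := MonoidHom.mk' (shift d) (shift_mul d)

@[simp]
lemma shiftHom_apply (d : ℕ) (π : Perm ℕ) : shiftHom d π = shift d π := rfl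

lemma shift_shift (a b : ℕ) (π : Perm ℕ) : shift a (shift b π) = shift (a + b) π := by
  ext k
  rcases lt_or_ge k a with h | h
  · rw [shift_apply_of_lt _ h, shift_apply_of_lt _ (by omega)]
  rcases lt_or_ge k (a + b) with h' | h'
  · rw [shift_apply_of_le _ h, shift_apply_of_lt _ (by omega), shift_apply_of_lt _ h']
    omega
  · rw [shift_apply_of_le _ h, shift_apply_of_le _ (by omega), shift_apply_of_le _ h',
      Nat.sub_sub]
    omega

lemma shift_apply_eq_self {d e k : ℕ} {π : Perm ℕ} (hπ : ∀ k, e ≤ k → π k = k)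
    (hk : d + e ≤ k) : shift d π k = k := by
  rw [shift_apply_of_le _ (by omega), hπ _ (by omega)]
  omega

end Shift

section Support

variable {a : ℕ} {π ρ : Perm ℕ}

lemma apply_lt_of_forall_le_apply_eq_self (hπ : ∀ k, a ≤ k → π k = k) {k : ℕ} (hk : k < a) :
    π k < a := by
  by_contra! h
  have := π.injective (hπ _ h)
  omega

lemma commute_of_forall_le_of_forall_lt (hπ : ∀ k, a ≤ k → π k = k)
    (hρ : ∀ k, k < a → ρ k = k) : Commute π ρ :=
  Perm.Disjoint.commute fun k => (lt_or_ge k a).elim (Or.inr ∘ hρ k) (Or.inl ∘ hπ k)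

lemma commute_shift_of_forall_le (hπ : ∀ k, a ≤ k → π k = k) (ρ : Perm ℕ) :
    Commute π (shift a ρ) :=
  commute_of_forall_le_of_forall_lt hπ fun _ hk => shift_apply_of_lt ρ hk

lemma commute_shift_shift_of_add_le {d e e' : ℕ} (hπ : ∀ k, d ≤ k → π k = k) (ρ : Perm ℕ)
    (h : e + d ≤ e') : Commute (shift e π) (shift e' ρ) :=
  commute_of_forall_le_of_forall_lt (fun _ hk => shift_apply_eq_self hπ (by omega))
    fun _ hk => shift_apply_of_lt ρ (by omega)

lemma commute_shift_mul_shift_mul {d : ℕ} (hπ : ∀ k, d ≤ k → π k = k) (i j : ℕ) :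
    Commute (shift (i * d) π) (shift (j * d) π) := by
  rcases lt_trichotomy i j with h | rfl | h
  · exact commute_shift_shift_of_add_le hπ π (by nlinarith)
  · exact Commute.refl _
  · exact (commute_shift_shift_of_add_le hπ π (by nlinarith)).symm

end Support

section Theta

lemma theta_apply (d k : ℕ) :
    theta d k = if k < d then k + d else if k < 2 * d then k - d else k := rfl

lemma theta_mul_self (d : ℕ) : theta d * theta d = 1 := by
  ext k
  simp only [Perm.mul_apply, Perm.one_apply, theta_apply]
  split_ifs <;> omega

lemma theta_inv (d : ℕ) : (theta d)⁻¹ = theta d :=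
  inv_eq_of_mul_eq_one_right (theta_mul_self d)

lemma theta_apply_of_lt {d k : ℕ} (h : k < d) : theta d k = k + d := if_pos h

lemma theta_apply_of_le_of_lt {d k : ℕ} (h : d ≤ k) (h' : k < 2 * d) : theta d k = k - d := by
  rw [theta_apply, if_neg (by omega), if_pos h']

lemma theta_apply_of_le {d k : ℕ} (h : 2 * d ≤ k) : theta d k = k := by
  rw [theta_apply, if_neg (by omega), if_neg (by omega)]

variable {d : ℕ} {π : Perm ℕ}

lemma theta_mul_shift_mul_theta (hπ : ∀ k, d ≤ k → π k = k) :
    theta d * shift d π * theta d = π := by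
  ext k
  simp only [Perm.mul_apply]
  rcases lt_or_ge k d with h | h
  · have := apply_lt_of_forall_le_apply_eq_self hπ h
    rw [theta_apply_of_lt h, shift_apply_of_le _ (by omega), Nat.add_sub_cancel,
      theta_apply_of_le_of_lt (by omega) (by omega), Nat.add_sub_cancel]
  rcases lt_or_ge k (2 * d) with h' | h'
  · rw [theta_apply_of_le_of_lt h h', shift_apply_of_lt _ (by omega), theta_apply_of_lt (by omega),
      hπ k h, Nat.sub_add_cancel h]
  · rw [theta_apply_of_le h', shift_apply_eq_self hπ (by omega), theta_apply_of_le h', hπ k h]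

lemma theta_mul_mul_theta (hπ : ∀ k, d ≤ k → π k = k) : theta d * π * theta d = shift d π := by
  calc theta d * π * theta d = theta d * (theta d * shift d π * theta d) * theta d := by
        rw [theta_mul_shift_mul_theta hπ]
    _ = shift d π := by
        simp only [← mul_assoc, theta_mul_self, one_mul]
        rw [mul_assoc, theta_mul_self, mul_one]

end Theta

section ThetaMulMulShift

variable {d : ℕ} {ς₁ ς₂ : Perm ℕ}

lemma theta_mul_mul_shift_conj_shift (h₁ : ∀ k, d ≤ k → ς₁ k = k) {π : Perm ℕ}
    (hπ : ∀ k, d ≤ k → π k = k) (hc : Commute ς₂ π) :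
    theta d * ς₁ * shift d ς₂ * shift d π * (theta d * ς₁ * shift d ς₂)⁻¹ = π := by
  have hς₂ : shift d ς₂ * shift d π * (shift d ς₂)⁻¹ = shift d π :=
    (hc.map (shiftHom d)).mul_inv_cancel
  have hς₁ : ς₁ * shift d π * ς₁⁻¹ = shift d π :=
    (commute_shift_of_forall_le h₁ π).mul_inv_cancel
  calc theta d * ς₁ * shift d ς₂ * shift d π * (theta d * ς₁ * shift d ς₂)⁻¹
      = theta d * (ς₁ * (shift d ς₂ * shift d π * (shift d ς₂)⁻¹) * ς₁⁻¹) * (theta d)⁻¹ := by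
        group
    _ = π := by rw [hς₂, hς₁, theta_inv, theta_mul_shift_mul_theta hπ]

lemma theta_mul_mul_shift_sq (h₁ : ∀ k, d ≤ k → ς₁ k = k) (h₂ : ∀ k, d ≤ k → ς₂ k = k)
    (hc : Commute ς₁ ς₂) :
    (theta d * ς₁ * shift d ς₂) ^ 2 = ς₁ * ς₂ * shift d (ς₁ * ς₂) := by
  have hθ₂ : shift d ς₂ * theta d = theta d * ς₂ := by
    rw [← theta_mul_mul_theta h₂, mul_assoc, theta_mul_self, mul_one]
  have hτ : Commute (ς₁ * ς₂) (shift d ς₁) :=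
    commute_shift_of_forall_le (fun k hk => by rw [Perm.mul_apply, h₂ k hk, h₁ k hk]) ς₁
  calc (theta d * ς₁ * shift d ς₂) ^ 2
      = theta d * ς₁ * (shift d ς₂ * theta d) * ς₁ * shift d ς₂ := by
        simp only [pow_two, mul_assoc]
    _ = theta d * ς₁ * theta d * (ς₂ * ς₁) * shift d ς₂ := by
        rw [hθ₂]; simp only [mul_assoc]
    _ = shift d ς₁ * (ς₁ * ς₂) * shift d ς₂ := by rw [theta_mul_mul_theta h₁, hc.eq]
    _ = ς₁ * ς₂ * shift d (ς₁ * ς₂) := by rw [← hτ.eq, mul_assoc, shift_mul]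

end ThetaMulMulShift

lemma commute_of_mem_closure_shift_mul {d n : ℕ} {τ : Perm ℕ} (hτ : ∀ k, d ≤ k → τ k = k)
    {a b : Perm ℕ}
    (ha : a ∈ Subgroup.closure {x | ∃ k < n, x ∈ Subgroup.zpowers (shift (k * d) τ)})
    (hb : b ∈ Subgroup.closure {x | ∃ k < n, x ∈ Subgroup.zpowers (shift (k * d) τ)}) :
    Commute a b := by
  refine Set.centralizer_centralizer_comm_of_comm ?_ _
    (Subgroup.closure_le_centralizer_centralizer _ ha) _
    (Subgroup.closure_le_centralizer_centralizer _ hb)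
  rintro _ ⟨i, -, ⟨p, rfl⟩⟩ _ ⟨j, -, ⟨q, rfl⟩⟩
  exact ((commute_shift_mul_shift_mul hτ i j).zpow_zpow p q).eq

lemma conj_conj_eq_self_of_commute_sq {G : Type*} [Group G] {g a : G} (h : Commute (g ^ 2) a) :
    g * (g * a * g⁻¹) * g⁻¹ = a :=
  calc g * (g * a * g⁻¹) * g⁻¹ = g ^ 2 * a * (g ^ 2)⁻¹ := by
        simp only [pow_two, mul_inv_rev, mul_assoc]
    _ = a := h.mul_inv_cancel

theorem stmt_11_general (d n : ℕ) (ς₁ ς₂ τ : Equiv.Perm ℕ)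
    (h₁ : ∀ k, d ≤ k → ς₁ k = k) (h₂ : ∀ k, d ≤ k → ς₂ k = k)
    (hτ : ς₁ * ς₂ = τ) (hτ' : ς₂ * ς₁ = τ)
    (σ : Equiv.Perm ℕ) (hσ : σ = theta d * ς₁ * shift d ς₂)
    (σs : ℕ → Equiv.Perm ℕ) (hσs : ∀ s, σs s = shift ((s - 1) * d) σ)
    (B T A : Subgroup (Equiv.Perm ℕ))
    (hT : T = Subgroup.closure {x | ∃ k < n, x ∈ Subgroup.zpowers (shift (k * d) τ)})
    (hA : A = B ⊓ T) :
    (∀ s, 1 ≤ s → s ≤ n - 1 →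
      σs s * shift (s * d) (τ * τ) * (σs s)⁻¹ = shift ((s - 1) * d) (τ * τ)) ∧
      (∀ s, 1 ≤ s → s ≤ n - 1 → ∀ a ∈ A,
        σs s * (σs s * a * (σs s)⁻¹) * (σs s)⁻¹ = a) := by
  subst hσ hT hA
  have hτfix : ∀ k, d ≤ k → τ k = k := fun k hk => by rw [← hτ, Perm.mul_apply, h₂ k hk, h₁ k hk]
  have hς₂τ : Commute ς₂ τ := by
    show ς₂ * τ = τ * ς₂
    rw [← hτ, ← mul_assoc, hτ', hτ]
  refine ⟨fun s hs _ => ?_, fun s hs hsn a ha => ?_⟩ <;>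
    obtain ⟨t, rfl⟩ : ∃ t, s = t + 1 := ⟨s - 1, by omega⟩ <;>
    rw [hσs, Nat.add_sub_cancel]
  · have hconj := congrArg (shiftHom (t * d)) <| theta_mul_mul_shift_conj_shift h₁ (π := τ * τ)
      (fun k hk => by rw [Perm.mul_apply, hτfix k hk, hτfix k hk]) (hς₂τ.mul_right hς₂τ)
    rw [map_mul, map_mul, map_inv] at hconj
    rwa [Nat.succ_mul, ← shift_shift]
  · have hblock : ∀ k < n, shift (k * d) τ ∈
        Subgroup.closure {x | ∃ k < n, x ∈ Subgroup.zpowers (shift (k * d) τ)} :=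
      fun k hk => Subgroup.subset_closure ⟨k, hk, Subgroup.mem_zpowers _⟩
    refine conj_conj_eq_self_of_commute_sq (commute_of_mem_closure_shift_mul hτfix ?_ ha.2)
    rw [← shiftHom_apply, ← map_pow, theta_mul_mul_shift_sq h₁ h₂ (hτ.trans hτ'.symm), hτ,
      map_mul, shiftHom_apply, shiftHom_apply, shift_shift, ← Nat.succ_mul]
    exact mul_mem (hblock t (by omega)) (hblock (t + 1) (by omega))

/-- With `σ = θ·ς₁·ω^d(ς₂)`, `ς₁ς₂ = ς₂ς₁ = τ`, `σ_s = ω^{(s-1)d}(σ)`: conjugation by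
`σ_s` sends `ω^{sd}(τ²)` to `ω^{(s-1)d}(τ²)`, and the restriction of `c_{σ_s}` to the
abelian subgroup `Aₙ(σ) = Bₙ(σ) ∩ ⟨τ⟩^{(n)}` is an involution. -/
theorem stmt_11 (d n : ℕ) (hd : 2 ≤ d) (hn : 3 ≤ n) (ς₁ ς₂ τ : Equiv.Perm ℕ)
    (h₁ : ∀ k, d ≤ k → ς₁ k = k) (h₂ : ∀ k, d ≤ k → ς₂ k = k)
    (hτ : ς₁ * ς₂ = τ) (hτ' : ς₂ * ς₁ = τ)
    (σ : Equiv.Perm ℕ) (hσ : σ = theta d * ς₁ * shift d ς₂)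
    (σs : ℕ → Equiv.Perm ℕ) (hσs : ∀ s, σs s = shift ((s - 1) * d) σ)
    (B T A : Subgroup (Equiv.Perm ℕ))
    (hB : B = Subgroup.closure {x | ∃ s, 1 ≤ s ∧ s ≤ n - 1 ∧ x = σs s})
    (hT : T = Subgroup.closure {x | ∃ k < n, x ∈ Subgroup.zpowers (shift (k * d) τ)})
    (hA : A = B ⊓ T) :
    (∀ s, 1 ≤ s → s ≤ n - 1 →
      σs s * shift (s * d) (τ * τ) * (σs s)⁻¹ = shift ((s - 1) * d) (τ * τ)) ∧
      (∀ s, 1 ≤ s → s ≤ n - 1 → ∀ a ∈ A,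
        σs s * (σs s * a * (σs s)⁻¹) * (σs s)⁻¹ = a) :=
  stmt_11_general d n ς₁ ς₂ τ h₁ h₂ hτ hτ' σ hσ σs hσs B T A hT hA
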